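/- arXiv:2508.02209 — 2 statements merged into one kernel-verified Lean document; each statement's English description precedes it below -/
import Mathlib

section
/- For w = 1/2 and p ∈ (1/2,1), the joint accuracy with majority voting over m = 2r+1 (odd) independent voters, P_m = Σ_{k=r+1}^{2r+1} C(2r+1,k) p^k (1-p)^{2r+1-k}, is at least p for every r ≥ 0. -/
/-!
Write `q = 1 - p` and `P(p, q)` for the majority tail. Reflecting `k ↦ 2r+1-k` turns the minority
tail into `P(q, p)`, so the binomial theorem gives `P(p, q) + P(q, p) = 1`. Hence
`P(p, q) - p = q P(p, q) - p P(q, p) = ∑_{k > r} C(2r+1, k) (p^k q^(2r+2-k) - p^(2r+2-k) q^k)`,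
and every term is nonnegative because `k ≥ 2r+2-k` and `p ≥ q ≥ 0`.
-/

open Finset

variable {R : Type*}

def majorityProb [CommSemiring R] (x y : R) (r : ℕ) : R :=
  ∑ k ∈ Icc (r + 1) (2 * r + 1), ((2 * r + 1).choose k : R) * x ^ k * y ^ (2 * r + 1 - k)

theorem majorityProb_add_majorityProb_swap [CommSemiring R] (x y : R) (r : ℕ) :
    majorityProb x y r + majorityProb y x r = (x + y) ^ (2 * r + 1) := by
  have hminority : majorityProb y x r =
      ∑ k ∈ range (r + 1), ((2 * r + 1).choose k : R) * x ^ k * y ^ (2 * r + 1 - k) := by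
    refine sum_nbij' (2 * r + 1 - ·) (2 * r + 1 - ·) ?_ ?_ ?_ ?_ ?_ <;> intro k hk <;>
      simp only [mem_Icc, mem_range] at hk ⊢ <;> try omega
    rw [Nat.choose_symm hk.2, Nat.sub_sub_self hk.2]
    ring
  rw [hminority, add_pow, ← sum_range_add_sum_Ico _ (by omega : r + 1 ≤ 2 * r + 1 + 1),
    Ico_add_one_right_eq_Icc, majorityProb, add_comm]
  congr 1 <;> exact sum_congr rfl fun k _ ↦ by ring

theorem pow_mul_pow_le_pow_mul_pow [CommSemiring R] [PartialOrder R] [IsOrderedRing R]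
    {x y : R} (hy : 0 ≤ y) (hyx : y ≤ x) {j k : ℕ} (hjk : j ≤ k) :
    x ^ j * y ^ k ≤ x ^ k * y ^ j := by
  obtain ⟨d, rfl⟩ := Nat.exists_eq_add_of_le hjk
  have hx : 0 ≤ x := hy.trans hyx
  calc x ^ j * y ^ (j + d) = x ^ j * y ^ j * y ^ d := by ring
    _ ≤ x ^ j * y ^ j * x ^ d := by gcongr
    _ = x ^ (j + d) * y ^ j := by ring

theorem le_majorityProb [CommRing R] [PartialOrder R] [IsOrderedRing R] {p q : R}
    (hpq : p + q = 1) (hq : 0 ≤ q) (hqp : q ≤ p) (r : ℕ) : p ≤ majorityProb p q r := by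
  have hsum := majorityProb_add_majorityProb_swap p q r
  rw [hpq, one_pow] at hsum
  have hkey : p * majorityProb q p r ≤ q * majorityProb p q r := by
    simp only [majorityProb, mul_sum]
    refine sum_le_sum fun k hk ↦ ?_
    have hrk := (mem_Icc.mp hk).1
    calc p * ((2 * r + 1).choose k * q ^ k * p ^ (2 * r + 1 - k))
        = (2 * r + 1).choose k * (p ^ (2 * r + 1 - k + 1) * q ^ k) := by ring
      _ ≤ (2 * r + 1).choose k * (p ^ k * q ^ (2 * r + 1 - k + 1)) :=
        mul_le_mul_of_nonneg_left (pow_mul_pow_le_pow_mul_pow hq hqp (by omega))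
          (Nat.cast_nonneg _)
      _ = q * ((2 * r + 1).choose k * p ^ k * q ^ (2 * r + 1 - k)) := by ring
  linear_combination hkey - p * hsum + majorityProb p q r * hpq

/-- Condorcet jury theorem lower bound: for `p ∈ (1/2,1)`, the
majority-vote accuracy over `m = 2r+1` independent voters,
`P_m = ∑_{k=r+1}^{2r+1} C(2r+1,k) p^k (1-p)^{2r+1-k}`, is at least `p`. -/
theorem condorcet_lower_bound (p : ℝ) (hp : p ∈ Set.Ioo (1/2 : ℝ) 1) (r : ℕ) :
    p ≤ ∑ k ∈ Finset.Icc (r + 1) (2 * r + 1),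
        ((2 * r + 1).choose k : ℝ) * p ^ k * (1 - p) ^ (2 * r + 1 - k) := by
  obtain ⟨hhalf, hone⟩ := hp
  exact le_majorityProb (add_sub_cancel p 1) (by linarith) (by linarith) r
end

section
/- For p ∈ (1/2,1), the majority-vote accuracy over an odd number of voters is strictly increasing in the number of voters: P_{2r+3} > P_{2r+1} for all r ≥ 0, where P_{2r+1} = Σ_{k=r+1}^{2r+1} C(2r+1,k) p^k (1-p)^{2r+1-k}. -/
/-!
Write `B n k = C(n,k) p^k q^(n-k)` and `T n m = ∑_{k ≥ m} B n k`. Pascal's rule gives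
`B (n+1) (k+1) = p B n k + q B n (k+1)`, hence `T (n+1) (m+1) = T n (m+1) + p B n m` when
`p + q = 1`. Adding two voters therefore changes the tail by `p² B n m - q² B n (m+1)`: the
election is decided differently only when the first `n` voters are one vote short of (resp.
exactly at) the threshold and both new voters vote for (resp. against) the right answer. For
`n = 2r+1`, `m = r` this is `C(2r+1,r) (pq)^(r+1) (p - q) > 0`.
-/

open Finset

section Semiring

variable {R : Type*} [CommSemiring R] (p q : R)

def binomialTerm (n k : ℕ) : R := n.choose k * p ^ k * q ^ (n - k)

def binomialUpperTail (n m : ℕ) : R := ∑ k ∈ Icc m n, binomialTerm p q n k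

variable {p q}

theorem binomialTerm_eq_zero_of_lt {n k : ℕ} (h : n < k) : binomialTerm p q n k = 0 := by
  simp [binomialTerm, Nat.choose_eq_zero_of_lt h]

theorem binomialTerm_succ_succ (n k : ℕ) :
    binomialTerm p q (n + 1) (k + 1) =
      p * binomialTerm p q n k + q * binomialTerm p q n (k + 1) := by
  rcases lt_or_ge n (k + 1) with h | h
  · rw [binomialTerm_eq_zero_of_lt h]
    simp only [binomialTerm, Nat.choose_succ_succ, Nat.choose_eq_zero_of_lt h]
    rw [Nat.sub_eq_zero_of_le h, Nat.sub_eq_zero_of_le (by omega)]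
    push_cast
    ring
  · simp only [binomialTerm, Nat.choose_succ_succ, Nat.add_sub_add_right]
    rw [show n - k = n - (k + 1) + 1 by omega]
    push_cast
    ring

theorem binomialUpperTail_eq_add (n m : ℕ) :
    binomialUpperTail p q n m = binomialTerm p q n m + binomialUpperTail p q n (m + 1) := by
  rcases le_or_gt m n with h | h
  · rw [binomialUpperTail, binomialUpperTail, Icc_add_one_left_eq_Ioc, add_sum_Ioc_eq_sum_Icc h]
  · simp [binomialUpperTail, binomialTerm_eq_zero_of_lt h, Icc_eq_empty_of_lt h,
      Icc_eq_empty_of_lt (h.trans (Nat.lt_succ_self m))]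

theorem sum_Icc_binomialTerm_succ_top (n m : ℕ) :
    ∑ k ∈ Icc m (n + 1), binomialTerm p q n k = binomialUpperTail p q n m := by
  refine (sum_subset (Icc_subset_Icc_right n.le_succ) fun k hk hkn => ?_).symm
  exact binomialTerm_eq_zero_of_lt (by simp only [mem_Icc] at hk hkn; omega)

theorem binomialUpperTail_succ_succ (n m : ℕ) :
    binomialUpperTail p q (n + 1) (m + 1) =
      p * binomialUpperTail p q n m + q * binomialUpperTail p q n (m + 1) := by
  rw [binomialUpperTail, ← map_add_right_Icc m n 1, sum_map]
  simp only [addRightEmbedding_apply, binomialTerm_succ_succ, sum_add_distrib, ← mul_sum]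
  rw [← sum_Icc_binomialTerm_succ_top n (m + 1), ← map_add_right_Icc m n 1, sum_map]
  rfl

theorem binomialUpperTail_succ_succ_of_add_eq_one (hpq : p + q = 1) (n m : ℕ) :
    binomialUpperTail p q (n + 1) (m + 1) =
      binomialUpperTail p q n (m + 1) + p * binomialTerm p q n m := by
  rw [binomialUpperTail_succ_succ, binomialUpperTail_eq_add n m, mul_add, add_assoc, ← add_mul,
    hpq, one_mul, add_comm]

end Semiring

section Ring

variable {R : Type*} [CommRing R] {p q : R}

theorem binomialUpperTail_add_two (hpq : p + q = 1) (n m : ℕ) :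
    binomialUpperTail p q (n + 2) (m + 2) = binomialUpperTail p q n (m + 1) +
      (p ^ 2 * binomialTerm p q n m - q ^ 2 * binomialTerm p q n (m + 1)) := by
  rw [binomialUpperTail_succ_succ_of_add_eq_one hpq,
    binomialUpperTail_succ_succ_of_add_eq_one hpq, binomialTerm_succ_succ,
    binomialUpperTail_eq_add n (m + 1)]
  linear_combination (q + 1) * binomialTerm p q n (m + 1) * hpq

theorem sq_mul_binomialTerm_sub_sq_mul_binomialTerm (r : ℕ) :
    p ^ 2 * binomialTerm p q (2 * r + 1) r - q ^ 2 * binomialTerm p q (2 * r + 1) (r + 1) =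
      (2 * r + 1).choose r * (p * q) ^ (r + 1) * (p - q) := by
  have hchoose : (2 * r + 1).choose (r + 1) = (2 * r + 1).choose r := by
    rw [show 2 * r + 1 = r + (r + 1) by ring, Nat.choose_symm_add]
  simp only [binomialTerm, hchoose, show 2 * r + 1 - r = r + 1 by omega,
    show 2 * r + 1 - (r + 1) = r by omega]
  ring

end Ring

/-- for `p ∈ (1/2,1)`, the majority-vote accuracy over an odd
number of voters is strictly increasing: `P_{2r+3} > P_{2r+1}` for all `r ≥ 0`,
where `P_{2r+1} = ∑_{k=r+1}^{2r+1} C(2r+1,k) p^k (1-p)^{2r+1-k}`. -/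
theorem majority_accuracy_strict_increasing (p : ℝ) (hp : p ∈ Set.Ioo (1/2 : ℝ) 1) (r : ℕ) :
    ∑ k ∈ Finset.Icc (r + 1) (2 * r + 1),
        ((2 * r + 1).choose k : ℝ) * p ^ k * (1 - p) ^ (2 * r + 1 - k)
      < ∑ k ∈ Finset.Icc (r + 2) (2 * r + 3),
          ((2 * r + 3).choose k : ℝ) * p ^ k * (1 - p) ^ (2 * r + 3 - k) := by
  obtain ⟨hp_half, hp_one⟩ := hp
  have hgap : 0 < ((2 * r + 1).choose r : ℝ) * (p * (1 - p)) ^ (r + 1) * (p - (1 - p)) := by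
    have : 0 < p * (1 - p) := mul_pos (by linarith) (by linarith)
    have : (0 : ℝ) < (2 * r + 1).choose r := by exact_mod_cast Nat.choose_pos (by omega)
    have : 0 < p - (1 - p) := by linarith
    positivity
  have key := binomialUpperTail_add_two (add_sub_cancel p 1) (2 * r + 1) r
  rw [sq_mul_binomialTerm_sub_sq_mul_binomialTerm] at key
  change binomialUpperTail p (1 - p) (2 * r + 1) (r + 1) <
    binomialUpperTail p (1 - p) (2 * r + 3) (r + 2)
  linarith
end
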